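/- Let φ be a white-noise random dynamical system on a complete separable metric space (E,d) with invariant probability measure ρ. If for every pair of points x,y ∈ E the distance d(φ_t(·,x), φ_t(·,y)) converges to 0 in probability as t → ∞, then φ is strongly mixing with respect to ρ, i.e., for every x ∈ E the law of φ_t(·,x) converges weakly to ρ as t → ∞. -/

import Mathlib

open MeasureTheory ProbabilityTheory Filter Topology
open scoped ENNReal

/-- A white-noise (filtered) random dynamical system on a metric space `E` over an ergodic
metric dynamical system `θ` on a probability space `(Ω, F, P)`. -/
structure WhiteNoiseRDS (Ω E : Type) [MeasurableSpace Ω] [MetricSpace E]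
    [MeasurableSpace E] [BorelSpace E] where
  /-- the underlying probability measure -/
  P : Measure Ω
  P_prob : IsProbabilityMeasure P
  /-- the metric dynamical system (group of shifts) -/
  θ : ℝ → Ω → Ω
  θ_meas : ∀ t, Measurable (θ t)
  θ_zero : ∀ ω, θ 0 ω = ω
  θ_add : ∀ s t : ℝ, ∀ ω, θ (s + t) ω = θ s (θ t ω)
  θ_preserves : ∀ t, MeasurePreserving (θ t) P P
  θ_ergodic : ∀ A : Set Ω, MeasurableSet A → (∀ t, θ t ⁻¹' A = A) → P A = 0 ∨ P A = 1
  /-- the cocycle -/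
  φ : ℝ → Ω → E → E
  φ_meas : Measurable fun p : ℝ × Ω × E => φ p.1 p.2.1 p.2.2
  φ_zero : ∀ ω x, φ 0 ω x = x
  φ_cocycle : ∀ s t : ℝ, 0 ≤ s → 0 ≤ t → ∀ ω x, φ (t + s) ω x = φ t (θ s ω) (φ s ω x)
  φ_cont : ∀ s : ℝ, 0 ≤ s → ∀ ω, Continuous fun x => φ s ω x
  /-- two-parameter filtration -/
  F : ℝ → ℝ → MeasurableSpace Ω
  F_le : ∀ s t : ℝ, F s t ≤ ‹MeasurableSpace Ω›
  F_mono : ∀ s t u v : ℝ, s ≤ t → t ≤ u → u ≤ v → F t u ≤ F s v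
  F_shift : ∀ r s t : ℝ, F (s + r) (t + r) = MeasurableSpace.comap (θ r) (F s t)
  F_indep : ∀ (n : ℕ) (ts : Fin (n + 1) → ℝ), Monotone ts →
    iIndep (fun i : Fin n => F (ts i.castSucc) (ts i.succ)) P
  φ_adapted : ∀ s : ℝ, 0 ≤ s → ∀ x : E, Measurable[F 0 s] fun ω => φ s ω x

namespace WhiteNoiseRDS

variable {Ω E : Type} [MeasurableSpace Ω] [MetricSpace E] [MeasurableSpace E] [BorelSpace E]

/-- `F_0`: the smallest σ-algebra containing all `F s 0`, `s ≤ 0`. -/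
def F0 (R : WhiteNoiseRDS Ω E) : MeasurableSpace Ω := ⨆ s ∈ Set.Iic (0 : ℝ), R.F s 0

/-- `ρ` is an invariant probability measure for the Markov semigroup associated to `φ`. -/
def Invariant (R : WhiteNoiseRDS Ω E) (ρ : Measure E) : Prop :=
  ∀ t : ℝ, 0 ≤ t → ∀ f : BoundedContinuousFunction E ℝ,
    ∫ x, (∫ ω, f (R.φ t ω x) ∂ R.P) ∂ρ = ∫ x, f x ∂ρ

/-- `φ` is strongly mixing w.r.t. `ρ`: the law of `φ_t(·,x)` converges weakly to `ρ`. -/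
def StronglyMixing (R : WhiteNoiseRDS Ω E) (ρ : Measure E) : Prop :=
  ∀ x : E, ∀ f : BoundedContinuousFunction E ℝ,
    Tendsto (fun t : ℝ => ∫ ω, f (R.φ t ω x) ∂ R.P) atTop (𝓝 (∫ y, f y ∂ρ))

/-- Weak global pointwise stability: there is a Borel set `U` of full `ρ`-measure and times
`t n ↑ ∞` such that any two points of `U` come `η`-close along `t n` with probability
bounded below by some `δ(x,y) > 0`. -/
def WeakGlobalPointwiseStability (R : WhiteNoiseRDS Ω E) (ρ : Measure E) : Prop :=
  ∃ U : Set E, MeasurableSet U ∧ ρ U = 1 ∧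
    ∃ t : ℕ → ℝ, StrictMono t ∧ Tendsto t atTop atTop ∧
      ∀ x ∈ U, ∀ y ∈ U, ∃ δ : ℝ≥0∞, 0 < δ ∧ ∀ η : ℝ, 0 < η →
        δ ≤ liminf (fun n => R.P {ω | dist (R.φ (t n) ω x) (R.φ (t n) ω y) ≤ η}) atTop

/-- Weak synchronization: there is an `F_0`-measurable random point `a` which is invariant
under the flow and attracts every deterministic point in probability (in the pullback sense). -/
def WeakSynchronization (R : WhiteNoiseRDS Ω E) : Prop :=
  ∃ a : Ω → E, Measurable[R.F0] a ∧
    (∀ t : ℝ, 0 ≤ t → ∀ᵐ ω ∂ R.P, R.φ t ω (a ω) = a (R.θ t ω)) ∧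
    ∀ x : E, ∀ ε : ℝ, 0 < ε →
      Tendsto (fun t : ℝ => R.P {ω | ε ≤ dist (R.φ t (R.θ (-t) ω) x) (a ω)}) atTop (𝓝 0)

end WhiteNoiseRDS

/-! By invariance of `ρ`, `∫ g(φₜ x) dP - ∫ g dρ = ∫ (∫ g(φₜ x) dP - ∫ g(φₜ y) dP) dρ(y)`, which is
at most `∫∫ |g(φₜ x) - g(φₜ y)| dP dρ(y)`. For bounded uniformly continuous `g` the inner integral
tends to `0` for every `y`, because `φₜ x` and `φₜ y` merge in probability, and dominated
convergence disposes of the outer one. Convergence of the integrals of all bounded Lipschitz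
functions already is weak convergence. -/

open scoped BoundedContinuousFunction

section ConvergenceInProbability

variable {ι Ω E : Type*} [MeasurableSpace Ω] {μ : Measure Ω} [IsProbabilityMeasure μ]
  [PseudoMetricSpace E] [MeasurableSpace E] [BorelSpace E] [SecondCountableTopology E]

lemma integral_abs_comp_sub_comp_le (g : E →ᵇ ℝ) {δ η : ℝ} (hη : 0 ≤ η)
    (hg : ∀ a b, dist a b < δ → dist (g a) (g b) ≤ η) {X Y : Ω → E}
    (hX : Measurable X) (hY : Measurable Y) :
    ∫ ω, |g (X ω) - g (Y ω)| ∂μ ≤ η + 2 * ‖g‖ * μ.real {ω | δ ≤ dist (X ω) (Y ω)} := by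
  set S := {ω | δ ≤ dist (X ω) (Y ω)}
  have hS : MeasurableSet S := measurableSet_le measurable_const (hX.dist hY)
  have h_int : Integrable (fun ω => η + S.indicator (fun _ => 2 * ‖g‖) ω) μ :=
    (integrable_const η).add ((integrable_const _).indicator hS)
  calc ∫ ω, |g (X ω) - g (Y ω)| ∂μ
      ≤ ∫ ω, (η + S.indicator (fun _ => 2 * ‖g‖) ω) ∂μ := by
        refine integral_mono (((g.integrable _).comp_measurable hX).sub
          ((g.integrable _).comp_measurable hY)).abs h_int (fun ω => ?_)
        rw [← Real.dist_eq]
        by_cases hω : ω ∈ S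
        · rw [Set.indicator_of_mem hω]
          linarith [g.dist_le_two_norm (X ω) (Y ω)]
        · rw [Set.indicator_of_notMem hω]
          simpa using hg _ _ (not_le.mp hω)
    _ = η + 2 * ‖g‖ * μ.real S := by
        rw [integral_add (integrable_const η) ((integrable_const _).indicator hS),
          integral_const, integral_indicator_const _ hS]
        simp [mul_comm]

lemma tendsto_integral_abs_comp_sub_comp_of_tendsto_measure_dist {l : Filter ι} {X Y : ι → Ω → E}
    (hX : ∀ i, Measurable (X i)) (hY : ∀ i, Measurable (Y i))
    (h : ∀ δ : ℝ, 0 < δ → Tendsto (fun i => μ {ω | δ ≤ dist (X i ω) (Y i ω)}) l (𝓝 0))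
    (g : E →ᵇ ℝ) (hg : UniformContinuous g) :
    Tendsto (fun i => ∫ ω, |g (X i ω) - g (Y i ω)| ∂μ) l (𝓝 0) := by
  refine Metric.tendsto_nhds.mpr fun ε hε => ?_
  obtain ⟨δ, hδ, hgδ⟩ := Metric.uniformContinuous_iff.mp hg (ε / 2) (half_pos hε)
  have h_far : Tendsto (fun i => 2 * ‖g‖ * μ.real {ω | δ ≤ dist (X i ω) (Y i ω)}) l (𝓝 0) := by
    simpa [measureReal_def] using
      ((ENNReal.tendsto_toReal ENNReal.zero_ne_top).comp (h δ hδ)).const_mul (2 * ‖g‖)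
  filter_upwards [h_far.eventually_lt_const (half_pos hε)] with i hi
  have h_le := integral_abs_comp_sub_comp_le (μ := μ) g (half_pos hε).le
    (fun a b hab => (hgδ hab).le) (hX i) (hY i)
  rw [Real.dist_0_eq_abs, abs_of_nonneg (integral_nonneg fun ω => abs_nonneg _)]
  linarith

end ConvergenceInProbability

namespace WhiteNoiseRDS

variable {Ω E : Type} [MeasurableSpace Ω] [MetricSpace E] [MeasurableSpace E] [BorelSpace E]
  (R : WhiteNoiseRDS Ω E)

instance isProbabilityMeasure_P : IsProbabilityMeasure R.P := R.P_prob

lemma measurable_φ (t : ℝ) (x : E) : Measurable fun ω => R.φ t ω x :=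
  R.φ_meas.comp (measurable_const.prodMk (measurable_id.prodMk measurable_const))

lemma measurable_φ_uncurry (t : ℝ) : Measurable fun p : E × Ω => R.φ t p.2 p.1 :=
  R.φ_meas.comp (measurable_const.prodMk (measurable_snd.prodMk measurable_fst))

noncomputable def law (t : ℝ) (x : E) : ProbabilityMeasure E :=
  ⟨R.P.map fun ω => R.φ t ω x,
    Measure.isProbabilityMeasure_map (R.measurable_φ t x).aemeasurable⟩

lemma integral_law (t : ℝ) (x : E) {f : E → ℝ} (hf : Continuous f) :
    ∫ z, f z ∂(R.law t x : Measure E) = ∫ ω, f (R.φ t ω x) ∂ R.P :=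
  integral_map (R.measurable_φ t x).aemeasurable hf.aestronglyMeasurable

lemma integrable_integral_φ_pair {ρ : Measure E} [IsFiniteMeasure ρ] (t : ℝ) (x : E)
    {h : E × E → ℝ} (hh : Measurable h) {C : ℝ} (hC : ∀ p, ‖h p‖ ≤ C) :
    Integrable (fun y => ∫ ω, h (R.φ t ω x, R.φ t ω y) ∂ R.P) ρ := by
  have h_meas : StronglyMeasurable fun y => ∫ ω, h (R.φ t ω x, R.φ t ω y) ∂ R.P :=
    (hh.comp (((R.measurable_φ t x).comp measurable_snd).prodMk
      (R.measurable_φ_uncurry t))).stronglyMeasurable.integral_prod_right'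
  refine .of_bound h_meas.aestronglyMeasurable C (ae_of_all _ fun y => ?_)
  simpa using norm_integral_le_of_norm_le_const (μ := R.P) (ae_of_all _ fun ω => hC _)

variable {ρ : Measure E} [IsProbabilityMeasure ρ]

lemma abs_integral_φ_sub_integral_le (hinv : R.Invariant ρ) {t : ℝ} (ht : 0 ≤ t) (x : E)
    (g : E →ᵇ ℝ) :
    |∫ ω, g (R.φ t ω x) ∂ R.P - ∫ y, g y ∂ρ| ≤
      ∫ y, ∫ ω, |g (R.φ t ω x) - g (R.φ t ω y)| ∂ R.P ∂ρ := by
  have hgφ : ∀ y, Integrable (fun ω => g (R.φ t ω y)) R.P := fun y =>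
    (g.integrable _).comp_measurable (R.measurable_φ t y)
  have hq : Integrable (fun y => ∫ ω, g (R.φ t ω y) ∂ R.P) ρ :=
    R.integrable_integral_φ_pair t x (h := fun p => g p.2)
      (g.continuous.measurable.comp measurable_snd) (fun p => g.norm_coe_le_norm p.2)
  have hD : Integrable (fun y => ∫ ω, |g (R.φ t ω x) - g (R.φ t ω y)| ∂ R.P) ρ :=
    R.integrable_integral_φ_pair t x (h := fun p => |g p.1 - g p.2|) (by fun_prop)
      (fun p => by simpa [← Real.dist_eq] using g.dist_le_two_norm p.1 p.2)
  rw [← hinv t ht g]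
  calc |∫ ω, g (R.φ t ω x) ∂ R.P - ∫ y, ∫ ω, g (R.φ t ω y) ∂ R.P ∂ρ|
      = |∫ y, (∫ ω, g (R.φ t ω x) ∂ R.P - ∫ ω, g (R.φ t ω y) ∂ R.P) ∂ρ| := by
        rw [integral_sub (integrable_const _) hq, integral_const, smul_eq_mul, probReal_univ,
          one_mul]
    _ ≤ ∫ y, |∫ ω, g (R.φ t ω x) ∂ R.P - ∫ ω, g (R.φ t ω y) ∂ R.P| ∂ρ :=
        abs_integral_le_integral_abs
    _ ≤ ∫ y, ∫ ω, |g (R.φ t ω x) - g (R.φ t ω y)| ∂ R.P ∂ρ := by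
        refine integral_mono ((integrable_const _).sub hq).abs hD fun y => ?_
        rw [← integral_sub (hgφ x) (hgφ y)]
        exact abs_integral_le_integral_abs

variable [SecondCountableTopology E]

lemma tendsto_integral_integral_abs_sub_φ
    (hconv : ∀ x y : E, ∀ ε : ℝ, 0 < ε →
      Tendsto (fun t : ℝ => R.P {ω | ε ≤ dist (R.φ t ω x) (R.φ t ω y)}) atTop (𝓝 0))
    (x : E) (g : E →ᵇ ℝ) (hg : UniformContinuous g) :
    Tendsto (fun t => ∫ y, ∫ ω, |g (R.φ t ω x) - g (R.φ t ω y)| ∂ R.P ∂ρ) atTop (𝓝 0) := by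
  have h_bound : ∀ p : E × E, ‖|g p.1 - g p.2|‖ ≤ 2 * ‖g‖ := fun p => by
    simpa [← Real.dist_eq] using g.dist_le_two_norm p.1 p.2
  have h_int := fun t => R.integrable_integral_φ_pair (ρ := ρ) t x (by fun_prop) h_bound
  simpa using tendsto_integral_filter_of_dominated_convergence (fun _ => 2 * ‖g‖)
    (.of_forall fun t => (h_int t).aestronglyMeasurable)
    (.of_forall fun t => ae_of_all _ fun y => by
      simpa using norm_integral_le_of_norm_le_const (μ := R.P)
        (ae_of_all _ fun ω => h_bound (R.φ t ω x, R.φ t ω y)))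
    (integrable_const _)
    (ae_of_all _ fun y => tendsto_integral_abs_comp_sub_comp_of_tendsto_measure_dist
      (fun t => R.measurable_φ t x) (fun t => R.measurable_φ t y) (hconv x y) g hg)

lemma tendsto_integral_φ_of_uniformContinuous (hinv : R.Invariant ρ)
    (hconv : ∀ x y : E, ∀ ε : ℝ, 0 < ε →
      Tendsto (fun t : ℝ => R.P {ω | ε ≤ dist (R.φ t ω x) (R.φ t ω y)}) atTop (𝓝 0))
    (x : E) (g : E →ᵇ ℝ) (hg : UniformContinuous g) :
    Tendsto (fun t => ∫ ω, g (R.φ t ω x) ∂ R.P) atTop (𝓝 (∫ y, g y ∂ρ)) := by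
  rw [tendsto_iff_norm_sub_tendsto_zero]
  refine squeeze_zero' (.of_forall fun _ => norm_nonneg _) ?_
    (R.tendsto_integral_integral_abs_sub_φ (ρ := ρ) hconv x g hg)
  filter_upwards [eventually_ge_atTop 0] with t ht
  exact R.abs_integral_φ_sub_integral_le hinv ht x g

end WhiteNoiseRDS

theorem stronglyMixing_of_pairwise_convergence_general
    {Ω E : Type} [MeasurableSpace Ω] [MetricSpace E]
    [TopologicalSpace.SeparableSpace E] [MeasurableSpace E] [BorelSpace E]
    (R : WhiteNoiseRDS Ω E) (ρ : MeasureTheory.Measure E) [MeasureTheory.IsProbabilityMeasure ρ]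
    (hinv : R.Invariant ρ)
    (hconv : ∀ x y : E, ∀ ε : ℝ, 0 < ε →
      Filter.Tendsto (fun t : ℝ => R.P {ω | ε ≤ dist (R.φ t ω x) (R.φ t ω y)})
        Filter.atTop (nhds 0)) :
    R.StronglyMixing ρ := by
  have : SecondCountableTopology E := UniformSpace.secondCountable_of_separable E
  intro x f
  have h_law : Tendsto (fun t => R.law t x) atTop (𝓝 (⟨ρ, ‹_›⟩ : ProbabilityMeasure E)) := by
    refine tendsto_iff_forall_lipschitz_integral_tendsto.mpr ?_
    rintro g ⟨C, hC⟩ ⟨L, hL⟩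
    simpa [R.integral_law _ _ hL.continuous] using R.tendsto_integral_φ_of_uniformContinuous hinv
      hconv x (.mkOfBound ⟨g, hL.continuous⟩ C hC) hL.uniformContinuous
  simpa [R.integral_law _ _ f.continuous] using
    ProbabilityMeasure.tendsto_iff_forall_integral_tendsto.mp h_law f

/-- **Lemma.** If a white-noise RDS on a complete separable metric space has an invariant
probability measure `ρ` and the distance of any two trajectories converges to `0` in
probability, then `φ` is strongly mixing w.r.t. `ρ`: the law of `φ_t(·,x)` converges
weakly to `ρ` for every `x`. -/
theorem stronglyMixing_of_pairwise_convergence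
    {Ω E : Type} [MeasurableSpace Ω] [MetricSpace E] [CompleteSpace E]
    [TopologicalSpace.SeparableSpace E] [MeasurableSpace E] [BorelSpace E]
    (R : WhiteNoiseRDS Ω E) (ρ : MeasureTheory.Measure E) [MeasureTheory.IsProbabilityMeasure ρ]
    (hinv : R.Invariant ρ)
    (hconv : ∀ x y : E, ∀ ε : ℝ, 0 < ε →
      Filter.Tendsto (fun t : ℝ => R.P {ω | ε ≤ dist (R.φ t ω x) (R.φ t ω y)})
        Filter.atTop (nhds 0)) :
    R.StronglyMixing ρ :=
  stronglyMixing_of_pairwise_convergence_general R ρ hinv hconv
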